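/- arXiv:1802.09045 — 5 statements merged into one kernel-verified Lean document; each statement's English description precedes it below -/
import Mathlib

section
/- Let α∈(0,1) and let z∈ℂ with 0<arg(z)<π. Then the improper integral ∫₀^∞ t^α/(t²−z²) dt converges and equals z^{α−1}·(π/(2cos(πα/2)))·e^{(1−α)πi/2}, where z^{α−1} is taken with the principal branch. For z with −π<arg(z)<0 the same formula holds with e^{−(1−α)πi/2} in place of e^{(1−α)πi/2}. -/
/-!
The substitution `y = t ^ 2` turns the integral into `½ ∫₀^∞ y^(s-1) / (y + w) dy` with
`s = (α + 1) / 2` and `w = -z²`. As a function of `w` this is holomorphic on the slit plane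
(differentiation under the integral sign, with a bound `‖y + w‖ ≥ c (1 + y)` locally uniform in
`w`). For `w = a > 0` the rescaling `y = a u` and the substitution `u = x / (1 - x)` reduce it to
`a^(s-1) B(s, 1 - s) = a^(s-1) π / sin (π s)`, and the identity theorem extends this formula to
the slit plane. Finally `log (-z²) = 2 log z ∓ π i` according to the sign of `arg z`, which turns
`(-z²)^((α-1)/2)` into `z^(α-1) e^{±(1-α)πi/2}`.
-/

open MeasureTheory Set Complex
open scoped Real Topology

lemma integrableOn_rpow_div_one_add {s : ℝ} (hs₀ : 0 < s) (hs₁ : s < 1) :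
    IntegrableOn (fun x : ℝ => x ^ (s - 1) / (1 + x)) (Ioi 0) := by
  have hmeas : AEStronglyMeasurable (fun x : ℝ => x ^ (s - 1) / (1 + x)) :=
    Measurable.aestronglyMeasurable (by fun_prop)
  have near_zero : IntegrableOn (fun x : ℝ => x ^ (s - 1) / (1 + x)) (Ioc 0 1) := by
    refine Integrable.mono' ?_ hmeas.restrict ?_ (g := fun x => x ^ (s - 1))
    · rw [← IntegrableOn, integrableOn_Ioc_iff_integrableOn_Ioo]
      exact (intervalIntegral.integrableOn_Ioo_rpow_iff zero_lt_one).2 (by linarith)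
    · filter_upwards [ae_restrict_mem measurableSet_Ioc] with x hx
      have hx₀ : 0 < x := hx.1
      rw [Real.norm_of_nonneg (by positivity)]
      exact div_le_self (by positivity) (by linarith)
  have near_top : IntegrableOn (fun x : ℝ => x ^ (s - 1) / (1 + x)) (Ioi 1) := by
    refine Integrable.mono' (integrableOn_Ioi_rpow_of_lt (by linarith : s - 2 < -1) one_pos)
      hmeas.restrict ?_
    filter_upwards [ae_restrict_mem measurableSet_Ioi] with x (hx : 1 < x)
    have hx₀ : 0 < x := one_pos.trans hx
    rw [Real.norm_of_nonneg (by positivity), show s - 2 = s - 1 - 1 by ring,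
      Real.rpow_sub_one hx₀.ne' (s - 1)]
    exact div_le_div_of_nonneg_left (by positivity) hx₀ (by linarith)
  simpa only [Ioc_union_Ioi_eq_Ioi zero_le_one] using near_zero.union near_top

lemma exists_mul_one_add_le_norm_ofReal_add {w₀ : ℂ} (hw₀ : w₀ ∈ slitPlane) :
    ∃ ε > 0, ∃ c > 0, ∀ w ∈ Metric.ball w₀ ε, ∀ x : ℝ, 0 ≤ x →
      c * (1 + x) ≤ ‖(x : ℂ) + w‖ := by
  obtain ⟨r, hr, hball⟩ := Metric.isOpen_iff.1 isOpen_slitPlane w₀ hw₀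
  set K := ‖w₀‖ + r / 2 with hK
  refine ⟨r / 2, by positivity, r / 2 / (1 + K + r / 2), by positivity, fun w hw x hx => ?_⟩
  rw [Metric.mem_ball] at hw
  have hxK : x - K ≤ ‖(x : ℂ) + w‖ := by
    have := norm_sub_norm_le (x : ℂ) (-w)
    rw [sub_neg_eq_add, norm_neg, norm_real, Real.norm_of_nonneg hx] at this
    have := norm_le_norm_add_norm_sub' w w₀
    rw [← dist_eq_norm] at this
    linarith
  have hr2 : r / 2 ≤ ‖(x : ℂ) + w‖ := by
    have hout : r ≤ dist (-(x : ℂ)) w₀ :=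
      not_lt.1 fun h => (neg_ofReal_mem_slitPlane.1 (hball h)).not_ge hx
    have hdist : dist (-(x : ℂ)) w = ‖(x : ℂ) + w‖ := by
      rw [dist_eq_norm, ← norm_neg]; congr 1; ring
    linarith [dist_triangle (-(x : ℂ)) w w₀]
  rw [div_mul_eq_mul_div, div_le_iff₀ (by positivity)]
  nlinarith [mul_le_mul_of_nonneg_left hr2 (by positivity : 0 ≤ K),
    mul_le_mul_of_nonneg_left hxK (by positivity : 0 ≤ r / 2)]

lemma norm_rpow_div_ofReal_add_pow_le {s c x : ℝ} {w : ℂ} (hc : 0 < c) (hx : 0 < x)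
    (h : c * (1 + x) ≤ ‖(x : ℂ) + w‖) {n : ℕ} (hn : n ≠ 0) :
    ‖((x ^ (s - 1) : ℝ) : ℂ) / ((x : ℂ) + w) ^ n‖ ≤ c⁻¹ ^ n * (x ^ (s - 1) / (1 + x)) := by
  rw [norm_div, norm_pow, norm_real, Real.norm_of_nonneg (by positivity)]
  calc x ^ (s - 1) / ‖(x : ℂ) + w‖ ^ n ≤ x ^ (s - 1) / (c * (1 + x)) ^ n := by
        gcongr
    _ = c⁻¹ ^ n * (x ^ (s - 1) / (1 + x) ^ n) := by
        rw [mul_pow, inv_pow]; field_simp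
    _ ≤ c⁻¹ ^ n * (x ^ (s - 1) / (1 + x)) := by
        gcongr
        exact le_self_pow₀ (by linarith) hn

lemma integrableOn_rpow_div_ofReal_add {s : ℝ} (hs₀ : 0 < s) (hs₁ : s < 1) {w : ℂ}
    (hw : w ∈ slitPlane) :
    IntegrableOn (fun x : ℝ => ((x ^ (s - 1) : ℝ) : ℂ) / ((x : ℂ) + w)) (Ioi 0) := by
  obtain ⟨ε, hε, c, hc, hbound⟩ := exists_mul_one_add_le_norm_ofReal_add hw
  refine ((integrableOn_rpow_div_one_add hs₀ hs₁).const_mul c⁻¹).mono'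
    (Measurable.aestronglyMeasurable (by fun_prop)) ?_
  filter_upwards [ae_restrict_mem measurableSet_Ioi] with x (hx : 0 < x)
  simpa using norm_rpow_div_ofReal_add_pow_le hc hx
    (hbound w (Metric.mem_ball_self hε) x hx.le) one_ne_zero

lemma differentiableOn_integral_rpow_div_ofReal_add {s : ℝ} (hs₀ : 0 < s) (hs₁ : s < 1) :
    DifferentiableOn ℂ (fun w : ℂ => ∫ x in Ioi (0 : ℝ), ((x ^ (s - 1) : ℝ) : ℂ) / ((x : ℂ) + w))
      slitPlane := by
  intro w₀ hw₀
  obtain ⟨ε, hε, c, hc, hbound⟩ := exists_mul_one_add_le_norm_ofReal_add hw₀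
  refine (hasDerivAt_integral_of_dominated_loc_of_deriv_le
    (F := fun w (x : ℝ) => ((x ^ (s - 1) : ℝ) : ℂ) / ((x : ℂ) + w))
    (F' := fun w (x : ℝ) => -(((x ^ (s - 1) : ℝ) : ℂ) / ((x : ℂ) + w) ^ 2))
    (bound := fun x => c⁻¹ ^ 2 * (x ^ (s - 1) / (1 + x)))
    (Metric.ball_mem_nhds w₀ hε)
    (.of_forall fun w => Measurable.aestronglyMeasurable (by fun_prop))
    (integrableOn_rpow_div_ofReal_add hs₀ hs₁ hw₀)
    (Measurable.aestronglyMeasurable (by fun_prop))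
    ?_ ((integrableOn_rpow_div_one_add hs₀ hs₁).const_mul _) ?_).2
      |>.differentiableAt.differentiableWithinAt
  · filter_upwards [ae_restrict_mem measurableSet_Ioi] with x (hx : 0 < x) w hw
    rw [norm_neg]
    exact norm_rpow_div_ofReal_add_pow_le hc hx (hbound w hw x hx.le) two_ne_zero
  · filter_upwards [ae_restrict_mem measurableSet_Ioi] with x (hx : 0 < x) w hw
    have hne : (x : ℂ) + w ≠ 0 := norm_pos_iff.1 <|
      (mul_pos hc (by linarith)).trans_le (hbound w hw x hx.le)
    simpa [div_eq_mul_inv] using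
      (((hasDerivAt_id w).const_add (x : ℂ)).inv hne).const_mul ((x ^ (s - 1) : ℝ) : ℂ)

lemma integral_rpow_mul_one_sub_rpow_neg {s : ℝ} (hs₀ : 0 < s) (hs₁ : s < 1) :
    ∫ x in Ioo (0 : ℝ) 1, x ^ (s - 1) * (1 - x) ^ (-s) = π / Real.sin (π * s) := by
  have hGamma : Gamma s * Gamma (1 - s) = betaIntegral s (1 - s) := by
    simpa using Gamma_mul_Gamma_eq_betaIntegral (s := s) (t := 1 - s) (by simpa)
      (by simpa using hs₁)
  have hbeta : betaIntegral s (1 - s) =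
      ∫ x in Ioo (0 : ℝ) 1, ((x ^ (s - 1) * (1 - x) ^ (-s) : ℝ) : ℂ) := by
    rw [betaIntegral, intervalIntegral.integral_of_le zero_le_one, integral_Ioc_eq_integral_Ioo]
    refine setIntegral_congr_fun measurableSet_Ioo fun x hx => ?_
    rw [ofReal_mul, ofReal_cpow hx.1.le, ofReal_cpow (by linarith [hx.2])]
    push_cast
    ring_nf
  apply ofReal_injective
  rw [← integral_complex_ofReal, ← hbeta, ← hGamma, Gamma_mul_Gamma_one_sub]
  push_cast
  rfl

lemma integral_rpow_div_one_add {s : ℝ} (hs₀ : 0 < s) (hs₁ : s < 1) :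
    ∫ y in Ioi (0 : ℝ), y ^ (s - 1) / (1 + y) = π / Real.sin (π * s) := by
  have himage : (fun x : ℝ => x / (1 - x)) '' Ioo 0 1 = Ioi 0 := by
    ext y
    constructor
    · rintro ⟨x, ⟨hx₀, hx₁⟩, rfl⟩
      exact div_pos hx₀ (sub_pos.2 hx₁)
    · intro (hy : 0 < y)
      refine ⟨y / (1 + y), ⟨by positivity, (div_lt_one (by positivity)).2 (by linarith)⟩, ?_⟩
      field_simp
      ring
  have hderiv : ∀ x ∈ Ioo (0 : ℝ) 1,
      HasDerivWithinAt (fun x => x / (1 - x)) (1 / (1 - x) ^ 2) (Ioo 0 1) x := by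
    intro x ⟨_, hx₁⟩
    refine (((hasDerivAt_id' x).div ((hasDerivAt_id' x).const_sub 1)
      (sub_pos.2 hx₁).ne').congr_deriv ?_).hasDerivWithinAt
    ring
  have hinj : InjOn (fun x : ℝ => x / (1 - x)) (Ioo 0 1) := by
    intro x ⟨_, hx₁⟩ y ⟨_, hy₁⟩ hxy
    rw [div_eq_div_iff (sub_pos.2 hx₁).ne' (sub_pos.2 hy₁).ne'] at hxy
    linarith
  rw [← himage, integral_image_eq_integral_abs_deriv_smul measurableSet_Ioo hderiv hinj,
    ← integral_rpow_mul_one_sub_rpow_neg hs₀ hs₁]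
  refine setIntegral_congr_fun measurableSet_Ioo fun x ⟨hx₀, hx₁⟩ => ?_
  have h₁ : 0 < 1 - x := sub_pos.2 hx₁
  rw [smul_eq_mul, abs_of_pos (by positivity), Real.div_rpow hx₀.le h₁.le, Real.rpow_neg h₁.le,
    Real.rpow_sub_one h₁.ne']
  field_simp
  ring

lemma integral_rpow_div_add_of_pos {s : ℝ} (hs₀ : 0 < s) (hs₁ : s < 1) {a : ℝ} (ha : 0 < a) :
    ∫ x in Ioi (0 : ℝ), x ^ (s - 1) / (x + a) = π / Real.sin (π * s) * a ^ (s - 1) := by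
  have hscale := integral_comp_mul_left_Ioi (fun x => x ^ (s - 1) / (x + a)) 0 ha
  have hcongr : ∀ y ∈ Ioi (0 : ℝ),
      (a * y) ^ (s - 1) / (a * y + a) = a⁻¹ * a ^ (s - 1) * (y ^ (s - 1) / (1 + y)) := by
    intro y (hy : 0 < y)
    rw [Real.mul_rpow ha.le hy.le]
    field_simp
    ring
  rw [mul_zero, setIntegral_congr_fun measurableSet_Ioi hcongr, integral_const_mul,
    integral_rpow_div_one_add hs₀ hs₁, smul_eq_mul, mul_assoc] at hscale
  rw [← mul_left_cancel₀ (inv_ne_zero ha.ne') hscale]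
  ring

lemma integral_rpow_div_ofReal_add {s : ℝ} (hs₀ : 0 < s) (hs₁ : s < 1) {w : ℂ}
    (hw : w ∈ slitPlane) :
    ∫ x in Ioi (0 : ℝ), ((x ^ (s - 1) : ℝ) : ℂ) / ((x : ℂ) + w) =
      ((π / Real.sin (π * s) : ℝ) : ℂ) * w ^ ((s : ℂ) - 1) := by
  have hreal : ∀ a : ℝ, 0 < a → ∫ x in Ioi (0 : ℝ), ((x ^ (s - 1) : ℝ) : ℂ) / ((x : ℂ) + a) =
      ((π / Real.sin (π * s) : ℝ) : ℂ) * (a : ℂ) ^ ((s : ℂ) - 1) := by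
    intro a ha
    have : ((s : ℂ) - 1) = ((s - 1 : ℝ) : ℂ) := by push_cast; ring
    rw [this, ← ofReal_cpow ha.le, ← ofReal_mul, ← integral_rpow_div_add_of_pos hs₀ hs₁ ha,
      ← integral_complex_ofReal]
    push_cast
    rfl
  have hG : AnalyticOnNhd ℂ (fun w : ℂ => ((π / Real.sin (π * s) : ℝ) : ℂ) * w ^ ((s : ℂ) - 1))
      slitPlane := fun w hw => analyticAt_const.mul (analyticAt_id.cpow analyticAt_const hw)
  have hofReal : Filter.Tendsto ((↑) : ℝ → ℂ) (𝓝[≠] 1) (𝓝[≠] 1) :=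
    continuous_ofReal.continuousWithinAt.tendsto_nhdsWithin fun _ => by simp_all
  refine ((differentiableOn_integral_rpow_div_ofReal_add hs₀ hs₁).analyticOnNhd isOpen_slitPlane
    |>.eqOn_of_preconnected_of_frequently_eq hG
      (starConvex_one_slitPlane.isPathConnected one_mem_slitPlane).isConnected.isPreconnected
      one_mem_slitPlane ?_ hw)
  exact hofReal.frequently
    ((eventually_nhdsWithin_of_eventually_nhds (lt_mem_nhds one_pos)).mono hreal).frequently

lemma integral_rpow_div_sq_add {α : ℝ} (hα₀ : -1 < α) (hα₁ : α < 1) {w : ℂ}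
    (hw : w ∈ slitPlane) :
    IntegrableOn (fun t : ℝ => ((t ^ α : ℝ) : ℂ) / ((t : ℂ) ^ 2 + w)) (Ioi 0) ∧
      ∫ t in Ioi (0 : ℝ), ((t ^ α : ℝ) : ℂ) / ((t : ℂ) ^ 2 + w) =
        ((π / (2 * Real.cos (π * α / 2)) : ℝ) : ℂ) * w ^ (((α : ℂ) - 1) / 2) := by
  set s := (α + 1) / 2 with hs
  have hs₀ : 0 < s := by linarith
  have hs₁ : s < 1 := by linarith
  set g : ℝ → ℂ := fun y => ((y ^ (s - 1) : ℝ) : ℂ) / ((y : ℂ) + w)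
  have hsubst : EqOn (fun t : ℝ => (|(2 : ℝ)| * t ^ ((2 : ℝ) - 1)) • g (t ^ (2 : ℝ)))
      (fun t : ℝ => 2 * (((t ^ α : ℝ) : ℂ) / ((t : ℂ) ^ 2 + w))) (Ioi 0) := by
    intro t (ht : 0 < t)
    have hpow : t * (t ^ (2 : ℝ)) ^ (s - 1) = t ^ α := by
      rw [← Real.rpow_mul ht.le, show α = 1 + 2 * (s - 1) by ring, Real.rpow_add ht,
        Real.rpow_one]
    simp only [g, Real.rpow_two, ← hpow]
    norm_num
    ring
  have hint := ((integrableOn_Ioi_comp_rpow_iff g two_ne_zero).2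
    (integrableOn_rpow_div_ofReal_add hs₀ hs₁ hw)).congr_fun hsubst measurableSet_Ioi
  have hval := integral_comp_rpow_Ioi g two_ne_zero
  rw [setIntegral_congr_fun measurableSet_Ioi hsubst, integral_const_mul,
    integral_rpow_div_ofReal_add hs₀ hs₁ hw] at hval
  refine ⟨(integrable_const_mul_iff (isUnit_iff_ne_zero.2 two_ne_zero) _).1 hint, ?_⟩
  have hsin : Real.sin (π * s) = Real.cos (π * α / 2) := by
    rw [show π * s = π * α / 2 + π / 2 by ring, Real.sin_add_pi_div_two]
  have hexp : (s : ℂ) - 1 = ((α : ℂ) - 1) / 2 := by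
    rw [hs]; push_cast; ring
  rw [hsin, hexp] at hval
  push_cast at hval ⊢
  linear_combination hval / 2

lemma log_neg_sq {z : ℂ} (hz : z ≠ 0) {θ : ℝ} (hθ : exp (θ * I) = -1)
    (h₁ : -π < 2 * arg z + θ) (h₂ : 2 * arg z + θ ≤ π) :
    log (-(z ^ 2)) = 2 * log z + θ * I := by
  have hexp : -(z ^ 2) = exp (2 * log z + θ * I) := by
    rw [exp_add, hθ, two_mul, exp_add, exp_log hz]
    ring
  rw [hexp, log_exp] <;> simpa [log_im]

lemma neg_sq_mem_slitPlane {z : ℂ} (hz : z ≠ 0) {θ : ℝ} (hθ : exp (θ * I) = -1)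
    (h₁ : -π < 2 * arg z + θ) (h₂ : 2 * arg z + θ < π) :
    -(z ^ 2) ∈ slitPlane := by
  rw [mem_slitPlane_iff_arg, ← log_im, log_neg_sq hz hθ h₁ h₂.le]
  exact ⟨by simpa [log_im] using h₂.ne, neg_ne_zero.2 (pow_ne_zero 2 hz)⟩

lemma neg_sq_cpow_div_two {z : ℂ} (hz : z ≠ 0) {θ : ℝ} (hθ : exp (θ * I) = -1)
    (h₁ : -π < 2 * arg z + θ) (h₂ : 2 * arg z + θ ≤ π) (b : ℂ) :
    (-(z ^ 2)) ^ (b / 2) = z ^ b * exp (θ * b / 2 * I) := by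
  rw [cpow_def_of_ne_zero (neg_ne_zero.2 (pow_ne_zero 2 hz)), log_neg_sq hz hθ h₁ h₂,
    cpow_def_of_ne_zero hz, ← exp_add]
  ring_nf

lemma integral_rpow_div_sq_sub_sq_of_exp_mul_I_eq_neg_one {α : ℝ} (hα₀ : -1 < α) (hα₁ : α < 1)
    {z : ℂ} (hz : z ≠ 0) {θ : ℝ} (hθ : exp (θ * I) = -1) (h₁ : -π < 2 * arg z + θ)
    (h₂ : 2 * arg z + θ < π) :
    IntegrableOn (fun t : ℝ => ((t ^ α : ℝ) : ℂ) / ((t : ℂ) ^ 2 - z ^ 2)) (Ioi 0) ∧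
      ∫ t in Ioi (0 : ℝ), ((t ^ α : ℝ) : ℂ) / ((t : ℂ) ^ 2 - z ^ 2) =
        z ^ ((α : ℂ) - 1) * ((π / (2 * Real.cos (π * α / 2)) : ℝ) : ℂ) *
          exp (θ * ((α : ℂ) - 1) / 2 * I) := by
  simp_rw [sub_eq_add_neg _ (z ^ 2), mul_right_comm _ _ (exp _),
    ← neg_sq_cpow_div_two hz hθ h₁ h₂.le, mul_comm (_ ^ _)]
  exact integral_rpow_div_sq_add hα₀ hα₁ (neg_sq_mem_slitPlane hz hθ h₁ h₂)

/-- **A contour integral identity**: for `α ∈ (0,1)` and nonreal `z`,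
`∫₀^∞ t^α/(t² - z²) dt = z^{α-1} (π / (2 cos(πα/2))) e^{±(1-α)πi/2}`,
with the sign `+` when `0 < arg z < π` and `-` when `-π < arg z < 0`
(principal branch powers). -/
theorem integral_rpow_div_sq_sub_sq (α : ℝ) (hα : α ∈ Set.Ioo (0 : ℝ) 1) (z : ℂ) :
    ((0 < z.arg ∧ z.arg < π) →
      IntegrableOn (fun t : ℝ => ((t ^ α : ℝ) : ℂ) / ((t : ℂ) ^ 2 - z ^ 2))
        (Set.Ioi 0) ∧
      ∫ t in Set.Ioi (0 : ℝ), ((t ^ α : ℝ) : ℂ) / ((t : ℂ) ^ 2 - z ^ 2) =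
        z ^ ((α : ℂ) - 1) * ((π / (2 * Real.cos (π * α / 2)) : ℝ) : ℂ) *
          Complex.exp ((((1 - α) * π / 2 : ℝ) : ℂ) * Complex.I)) ∧
    ((-π < z.arg ∧ z.arg < 0) →
      IntegrableOn (fun t : ℝ => ((t ^ α : ℝ) : ℂ) / ((t : ℂ) ^ 2 - z ^ 2))
        (Set.Ioi 0) ∧
      ∫ t in Set.Ioi (0 : ℝ), ((t ^ α : ℝ) : ℂ) / ((t : ℂ) ^ 2 - z ^ 2) =
        z ^ ((α : ℂ) - 1) * ((π / (2 * Real.cos (π * α / 2)) : ℝ) : ℂ) *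
          Complex.exp (-((((1 - α) * π / 2 : ℝ) : ℂ) * Complex.I))) := by
  obtain ⟨hα₀, hα₁⟩ := hα
  refine ⟨fun ⟨h₀, hπ⟩ => ?_, fun ⟨hπ, h₀⟩ => ?_⟩
  · obtain ⟨hint, hval⟩ := integral_rpow_div_sq_sub_sq_of_exp_mul_I_eq_neg_one (by linarith) hα₁
      (z := z) (θ := -π) (by rintro rfl; simp at h₀) (by simp) (by linarith) (by linarith)
    refine ⟨hint, hval.trans ?_⟩
    congr 2
    push_cast
    ring
  · obtain ⟨hint, hval⟩ := integral_rpow_div_sq_sub_sq_of_exp_mul_I_eq_neg_one (by linarith) hα₁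
      (z := z) (by rintro rfl; simp at h₀) exp_pi_mul_I (by linarith) (by linarith)
    refine ⟨hint, hval.trans ?_⟩
    congr 2
    push_cast
    ring
end

section
/- Let α∈(0,1), λ>0, β∈ℝ and c_α=(1−α/2)(1−α). Define Λ on ℂ∖ℝ by Λ(z) = (Γ(α)λ/c_α)(z²−β²) + z^{α−1}·(π/cos(πα/2))·e^{(1−α)πi/2} for Im(z)>0, and Λ(z) = (Γ(α)λ/c_α)(z²−β²) + z^{α−1}·(π/cos(πα/2))·e^{−(1−α)πi/2} for Im(z)<0 (principal branch powers). Then Λ has exactly two zeros in ℂ∖ℝ, namely z=iν and z=−iν, where ν is the unique positive real solution of λ = (c_α/Γ(α))·(π/cos(πα/2))·ν^{α−1}/(β²+ν²). -/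
open Complex Filter Topology
open scoped Real

/-!
With `A = Γ(α)λ/c_α > 0` and `B = π/cos(πα/2) > 0`, the substitution `z = ±i w` maps each half
plane onto the right half plane `Re w > 0`, and there the phase `e^{±(1-α)πi/2}` exactly cancels
the phase of `(±i)^{α-1}`, so `Λ(±i w) = B w^{α-1} - A (w² + β²)` in both cases.
For `Re w > 0`, `Im w ≠ 0`, the imaginary parts of `B w^{α-1}` and of `A w²` have opposite signs,
the second one strictly, so every zero in the right half plane is real. On `(0, ∞)` the function
`B t^{α-1} - A (t² + β²)` decreases strictly from `+∞` to `-∞`, hence has exactly one zero `ν`.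
-/

section RealRoot

variable {p A B : ℝ}

lemma strictAntiOn_mul_rpow_sub_mul_sq_add (hp : p < 0) (hA : 0 < A) (hB : 0 < B) (β : ℝ) :
    StrictAntiOn (fun t : ℝ => B * t ^ p - A * (t ^ 2 + β ^ 2)) (Set.Ioi 0) := by
  intro x hx y _ hxy
  have hpow : y ^ p < x ^ p := Real.rpow_lt_rpow_of_neg hx hxy hp
  have hsq : x ^ 2 < y ^ 2 := by gcongr; exact le_of_lt hx
  dsimp only
  nlinarith

lemma exists_pos_mul_rpow_eq_mul_sq_add (hp : p < 0) (hA : 0 < A) (hB : 0 < B) (β : ℝ) :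
    ∃ ν, 0 < ν ∧ B * ν ^ p = A * (ν ^ 2 + β ^ 2) := by
  set f : ℝ → ℝ := fun t => B * t ^ p + -(A * (t ^ 2 + β ^ 2))
  have hzero : Tendsto f (𝓝[>] 0) atTop :=
    ((tendsto_rpow_neg_nhdsGT_zero hp).const_mul_atTop hB).atTop_add
      ((continuous_const.mul (by fun_prop)).neg.continuousWithinAt (x := 0))
  have hinf : Tendsto f atTop atBot := by
    have hpow : Tendsto (fun t : ℝ => t ^ p) atTop (𝓝 0) := by
      simpa using tendsto_rpow_neg_atTop (y := -p) (by linarith)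
    refine (hpow.const_mul B).add_atBot (tendsto_neg_atTop_atBot.comp ?_)
    exact (tendsto_pow_atTop two_ne_zero |>.atTop_add tendsto_const_nhds).const_mul_atTop hA
  obtain ⟨a, hfa, ha_mem⟩ :=
    ((hzero.eventually (eventually_gt_atTop 0)).and self_mem_nhdsWithin).exists
  have ha0 : 0 < a := ha_mem
  obtain ⟨b, hfb, hab⟩ :=
    ((hinf.eventually (eventually_lt_atBot 0)).and (eventually_gt_atTop a)).exists
  have hcont : ContinuousOn f (Set.Icc a b) := by
    refine ContinuousOn.add ?_ (by fun_prop)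
    exact continuousOn_const.mul (continuousOn_id.rpow_const fun t ht =>
      Or.inl (ha0.trans_le ht.1).ne')
  obtain ⟨ν, hν, hfν⟩ := intermediate_value_Icc' hab.le hcont ⟨hfb.le, hfa.le⟩
  exact ⟨ν, ha0.trans_le hν.1, by linarith [hfν]⟩

lemma existsUnique_pos_mul_rpow_eq_mul_sq_add (hp : p < 0) (hA : 0 < A) (hB : 0 < B) (β : ℝ) :
    ∃! ν, 0 < ν ∧ B * ν ^ p = A * (ν ^ 2 + β ^ 2) := by
  obtain ⟨ν, hν, hνeq⟩ := exists_pos_mul_rpow_eq_mul_sq_add hp hA hB β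
  refine ⟨ν, ⟨hν, hνeq⟩, fun t ⟨ht, hteq⟩ => ?_⟩
  refine (strictAntiOn_mul_rpow_sub_mul_sq_add hp hA hB β).injOn ht hν ?_
  simp only [hteq, hνeq, sub_self]

end RealRoot

namespace Complex

lemma mul_cpow_of_arg_add_arg_mem {u w : ℂ} (hu : u ≠ 0) (hw : w ≠ 0)
    (harg : arg u + arg w ∈ Set.Ioc (-π) π) (s : ℂ) : (u * w) ^ s = u ^ s * w ^ s := by
  rw [cpow_def_of_ne_zero (mul_ne_zero hu hw), cpow_def_of_ne_zero hu, cpow_def_of_ne_zero hw,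
    log_mul hu hw harg, add_mul, exp_add]

lemma I_mul_cpow {w : ℂ} (hw : 0 < w.re) (s : ℂ) : (I * w) ^ s = exp (π / 2 * I * s) * w ^ s := by
  have hw0 : w ≠ 0 := fun h => by simp [h] at hw
  have harg := abs_lt.mp (abs_arg_lt_pi_div_two_iff.mpr (Or.inl hw))
  rw [mul_cpow_of_arg_add_arg_mem I_ne_zero hw0 (by rw [arg_I]; constructor <;> linarith) s,
    cpow_def_of_ne_zero I_ne_zero, log_I]

lemma neg_I_mul_cpow {w : ℂ} (hw : 0 < w.re) (s : ℂ) :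
    (-I * w) ^ s = exp (-(π / 2 * I * s)) * w ^ s := by
  have hw0 : w ≠ 0 := fun h => by simp [h] at hw
  have harg := abs_lt.mp (abs_arg_lt_pi_div_two_iff.mpr (Or.inl hw))
  rw [mul_cpow_of_arg_add_arg_mem (neg_ne_zero.mpr I_ne_zero) hw0
    (by rw [arg_neg_I]; constructor <;> linarith) s,
    cpow_def_of_ne_zero (neg_ne_zero.mpr I_ne_zero), log_neg_I]
  ring_nf

lemma im_cpow_ofReal_mul_im_nonpos {w : ℂ} (hw : 0 < w.re) {p : ℝ} (hp : p ≤ 0) (hp' : -2 ≤ p) :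
    (w ^ (p : ℂ)).im * w.im ≤ 0 := by
  rw [cpow_ofReal_im]
  have harg := abs_lt.mp (abs_arg_lt_pi_div_two_iff.mpr (Or.inl hw))
  have hnorm : 0 ≤ ‖w‖ ^ p := by positivity
  rcases le_or_gt 0 w.im with him | him
  · have h0 : 0 ≤ arg w := arg_nonneg_iff.mpr him
    have hsin : Real.sin (arg w * p) ≤ 0 :=
      Real.sin_nonpos_of_nonpos_of_neg_pi_le (by nlinarith) (by nlinarith)
    exact mul_nonpos_of_nonpos_of_nonneg (mul_nonpos_of_nonneg_of_nonpos hnorm hsin) him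
  · have h0 : arg w < 0 := arg_neg_iff.mpr him
    have hsin : 0 ≤ Real.sin (arg w * p) :=
      Real.sin_nonneg_of_nonneg_of_le_pi (by nlinarith) (by nlinarith)
    exact mul_nonpos_of_nonneg_of_nonpos (mul_nonneg hnorm hsin) him.le

end Complex

section RightHalfPlane

variable {p A B β : ℝ}

lemma im_eq_zero_of_mul_cpow_eq_mul_sq_add {w : ℂ} (hw : 0 < w.re) (hp : p ≤ 0) (hp' : -2 ≤ p)
    (hA : 0 < A) (hB : 0 ≤ B) (h : B * w ^ (p : ℂ) = A * (w ^ 2 + β ^ 2)) : w.im = 0 := by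
  have him := congrArg (fun u => u.im * w.im) h
  simp only [mul_im, ofReal_re, ofReal_im, zero_mul, add_zero, add_im, pow_two] at him
  have hcpow := mul_nonpos_of_nonneg_of_nonpos hB (im_cpow_ofReal_mul_im_nonpos hw hp hp')
  have : w.im ^ 2 ≤ 0 := by nlinarith [mul_pos hA hw]
  exact pow_eq_zero_iff two_ne_zero |>.mp (le_antisymm this (sq_nonneg _))

lemma mul_cpow_eq_mul_sq_add_iff {ν : ℝ}
    (hν : ∀ t, 0 < t → (B * t ^ p = A * (t ^ 2 + β ^ 2) ↔ t = ν))
    (hp : p ≤ 0) (hp' : -2 ≤ p) (hA : 0 < A) (hB : 0 ≤ B) {w : ℂ} (hw : 0 < w.re) :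
    B * w ^ (p : ℂ) = A * (w ^ 2 + β ^ 2) ↔ w = ν := by
  have hreal (t : ℝ) (ht : 0 < t) :
      B * (t : ℂ) ^ (p : ℂ) = A * ((t : ℂ) ^ 2 + β ^ 2) ↔ t = ν := by
    rw [← ofReal_cpow ht.le, ← hν t ht]; norm_cast
  constructor
  · intro h
    have hwre : w = w.re :=
      ext rfl (by simpa using im_eq_zero_of_mul_cpow_eq_mul_sq_add hw hp hp' hA hB h)
    rw [hwre] at h ⊢
    rw [(hreal _ hw).mp h]
  · rintro rfl
    rw [ofReal_re] at hw
    exact (hreal ν hw).mpr rfl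

end RightHalfPlane

lemma structural_eq_of_im_pos (α A B β : ℝ) {z : ℂ} (hz : 0 < z.im) :
    (A : ℂ) * (z ^ 2 - (β : ℂ) ^ 2) +
        z ^ ((α : ℂ) - 1) * (B : ℂ) * exp ((((1 - α) * π / 2 : ℝ) : ℂ) * I) =
      B * (-I * z) ^ ((α - 1 : ℝ) : ℂ) - A * ((-I * z) ^ 2 + β ^ 2) := by
  obtain ⟨w, rfl⟩ : ∃ w, z = I * w := ⟨-I * z, by ring_nf; simp⟩
  have hw : 0 < w.re := by simpa using hz
  have hrot : exp (π / 2 * I * ((α : ℂ) - 1)) * exp ((((1 - α) * π / 2 : ℝ) : ℂ) * I) = 1 := by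
    rw [← exp_add, show _ + _ = (0 : ℂ) by push_cast; ring, exp_zero]
  rw [I_mul_cpow hw, show -I * (I * w) = w by ring_nf; simp, mul_pow, I_sq]
  push_cast at hrot ⊢
  linear_combination (B * w ^ ((α : ℂ) - 1)) * hrot

lemma structural_eq_of_im_neg (α A B β : ℝ) {z : ℂ} (hz : z.im < 0) :
    (A : ℂ) * (z ^ 2 - (β : ℂ) ^ 2) +
        z ^ ((α : ℂ) - 1) * (B : ℂ) * exp (-((((1 - α) * π / 2 : ℝ) : ℂ) * I)) =
      B * (I * z) ^ ((α - 1 : ℝ) : ℂ) - A * ((I * z) ^ 2 + β ^ 2) := by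
  obtain ⟨w, rfl⟩ : ∃ w, z = -I * w := ⟨I * z, by ring_nf; simp⟩
  have hw : 0 < w.re := by simpa using hz
  have hrot :
      exp (-(π / 2 * I * ((α : ℂ) - 1))) * exp (-((((1 - α) * π / 2 : ℝ) : ℂ) * I)) = 1 := by
    rw [← exp_add, show _ + _ = (0 : ℂ) by push_cast; ring, exp_zero]
  rw [neg_I_mul_cpow hw, show I * (-I * w) = w by ring_nf; simp, mul_pow, neg_pow, I_sq]
  push_cast at hrot ⊢
  linear_combination (B * w ^ ((α : ℂ) - 1)) * hrot

lemma setOf_im_ne_zero_and_eq_zero {Λ G : ℂ → ℂ} {ν : ℝ} (hν : 0 < ν)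
    (hup : ∀ z, 0 < z.im → Λ z = G (-I * z)) (hdown : ∀ z, z.im < 0 → Λ z = G (I * z))
    (hG : ∀ w, 0 < w.re → (G w = 0 ↔ w = ν)) :
    {z | z.im ≠ 0 ∧ Λ z = 0} = {(ν : ℂ) * I, -((ν : ℂ) * I)} := by
  ext z
  simp only [Set.mem_ofPred_eq, Set.mem_insert_iff, Set.mem_singleton_iff]
  rcases lt_trichotomy z.im 0 with h | h | h
  · have hne : z ≠ ν * I := fun hz => by simp [hz] at h; linarith
    rw [hdown z h, hG _ (by simpa using h)]
    constructor
    · rintro ⟨-, hz⟩; right; linear_combination -I * hz + z * I_sq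
    · rintro (hz | hz)
      · exact absurd hz hne
      · exact ⟨h.ne, by linear_combination I * hz - ν * I_sq⟩
  · simp only [h, ne_eq, not_true_eq_false, false_and, false_iff]
    rintro (hz | hz) <;> simp [hz, hν.ne'] at h
  · have hne : z ≠ -(ν * I) := fun hz => by simp [hz] at h; linarith
    rw [hup z h, hG _ (by simpa using h)]
    constructor
    · rintro ⟨-, hz⟩; left; linear_combination I * hz + z * I_sq
    · rintro (hz | hz)
      · exact ⟨h.ne', by linear_combination -I * hz - ν * I_sq⟩
      · exact absurd hz hne

/-- **Zeros of the structural function of the fractional Ornstein--Uhlenbeck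
eigenproblem.** For `α ∈ (0,1)`, `λ > 0`, `β ∈ ℝ`, the function
`Λ(z) = (Γ(α)λ/c_α)(z² - β²) + z^{α-1} (π/cos(πα/2)) e^{±(1-α)πi/2}`
(sign according to the half plane) has exactly two zeros off the real line,
namely `±iν`, where `ν` is the unique positive solution of
`λ = (c_α/Γ(α)) (π/cos(πα/2)) ν^{α-1}/(β² + ν²)`. -/
theorem fou_structural_function_zeros
    (α lam β : ℝ) (hα : α ∈ Set.Ioo (0 : ℝ) 1) (hlam : 0 < lam)
    (cα : ℝ) (hcα : cα = (1 - α / 2) * (1 - α))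
    (Λ : ℂ → ℂ)
    (hup : ∀ z : ℂ, 0 < z.im → Λ z =
      ((Real.Gamma α * lam / cα : ℝ) : ℂ) * (z ^ 2 - (β : ℂ) ^ 2) +
        z ^ ((α : ℂ) - 1) * ((π / Real.cos (π * α / 2) : ℝ) : ℂ) *
          Complex.exp ((((1 - α) * π / 2 : ℝ) : ℂ) * Complex.I))
    (hdown : ∀ z : ℂ, z.im < 0 → Λ z =
      ((Real.Gamma α * lam / cα : ℝ) : ℂ) * (z ^ 2 - (β : ℂ) ^ 2) +
        z ^ ((α : ℂ) - 1) * ((π / Real.cos (π * α / 2) : ℝ) : ℂ) *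
          Complex.exp (-((((1 - α) * π / 2 : ℝ) : ℂ) * Complex.I))) :
    ∃ ν : ℝ, 0 < ν ∧
      lam = (cα / Real.Gamma α) * (π / Real.cos (π * α / 2)) *
        ν ^ (α - 1) / (β ^ 2 + ν ^ 2) ∧
      (∀ ν' : ℝ, 0 < ν' →
        lam = (cα / Real.Gamma α) * (π / Real.cos (π * α / 2)) *
          ν' ^ (α - 1) / (β ^ 2 + ν' ^ 2) → ν' = ν) ∧
      {z : ℂ | z.im ≠ 0 ∧ Λ z = 0} =
        {(ν : ℂ) * Complex.I, -((ν : ℂ) * Complex.I)} := by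
  obtain ⟨hα0, hα1⟩ := hα
  have hcαpos : 0 < cα := by rw [hcα]; nlinarith
  have hcos : 0 < Real.cos (π * α / 2) :=
    Real.cos_pos_of_mem_Ioo ⟨by nlinarith [Real.pi_pos], by nlinarith [Real.pi_pos]⟩
  set A := Real.Gamma α * lam / cα with hA_def
  set B := π / Real.cos (π * α / 2) with hB_def
  clear_value A B
  have hΓ : 0 < Real.Gamma α := Real.Gamma_pos_of_pos hα0
  have hA : 0 < A := by rw [hA_def]; positivity
  have hB : 0 < B := hB_def ▸ div_pos Real.pi_pos hcos
  have hlam_iff (t : ℝ) (ht : 0 < t) :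
      lam = cα / Real.Gamma α * B * t ^ (α - 1) / (β ^ 2 + t ^ 2) ↔
        B * t ^ (α - 1) = A * (t ^ 2 + β ^ 2) := by
    rw [mul_assoc, eq_div_iff (by positivity), div_mul_eq_mul_div, eq_div_iff hΓ.ne', hA_def,
      div_mul_eq_mul_div, eq_div_iff hcαpos.ne', add_comm (β ^ 2)]
    constructor <;> intro h <;> linarith
  obtain ⟨ν, ⟨hν, hνeq⟩, huniq⟩ :=
    existsUnique_pos_mul_rpow_eq_mul_sq_add (p := α - 1) (by linarith) hA hB β
  have hroot (t : ℝ) (ht : 0 < t) : B * t ^ (α - 1) = A * (t ^ 2 + β ^ 2) ↔ t = ν :=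
    ⟨fun h => huniq t ⟨ht, h⟩, by rintro rfl; exact hνeq⟩
  refine ⟨ν, hν, (hlam_iff ν hν).mpr hνeq, fun t ht h => huniq t ⟨ht, (hlam_iff t ht).mp h⟩, ?_⟩
  refine setOf_im_ne_zero_and_eq_zero hν
    (G := fun w => B * w ^ ((α - 1 : ℝ) : ℂ) - A * (w ^ 2 + β ^ 2))
    (fun z hz => (hup z hz).trans (structural_eq_of_im_pos α A B β hz))
    (fun z hz => (hdown z hz).trans (structural_eq_of_im_neg α A B β hz)) fun w hw => ?_
  exact sub_eq_zero.trans
    (mul_cpow_eq_mul_sq_add_iff hroot (by linarith) (by linarith) hA hB.le hw)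
end

section
/- Let α∈(0,1), λ>0 and c_α=(1−α/2)(1−α)>0. Define Λ on ℂ∖ℝ by Λ(z) = (λΓ(α)/c_α)z² − (π/cos(πα/2))·z^{α−3}·e^{(1−α)πi/2} for Im(z)>0, and with e^{−(1−α)πi/2} for Im(z)<0 (principal branch powers). Then Λ has exactly six zeros in ℂ∖ℝ, namely ±iν, ±ν·e^{i(π/2)(1−α)/(5−α)}, and ±ν·e^{i(π/2)(9−α)/(5−α)}, where ν>0 is determined by ν^{α−5} = (λΓ(α)/c_α)·cos(πα/2)/π. -/
/-!
On the upper half-plane, dividing by `z ^ (α - 3)` turns `Λ z = 0` into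
`z ^ (5 - α) = ν ^ (5 - α) * exp ((1 - α) π / 2 * I)`. In polar coordinates this says `‖z‖ = ν`
and `(5 - α) arg z ≡ (1 - α) π / 2 (mod 2π)`, which has exactly three solutions `arg z ∈ (0, π)`
because `(5 - α) π` lies between `(1 - α) π / 2 + 4π` and `(1 - α) π / 2 + 6π`. On the lower
half-plane `Λ z = conj (Λ (conj z))`, so the zeros there are the conjugates of those, and
`conj (ν exp (ψ I)) = -ν exp ((π - ψ) I)`.
-/

open Complex Set ComplexConjugate
open scoped Real

namespace Complex

lemma cpow_ofReal_eq_mul_exp (z : ℂ) (t : ℝ) :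
    z ^ (t : ℂ) = ↑(‖z‖ ^ t) * exp (↑(arg z * t) * I) := by
  rw [cpow_ofReal, exp_mul_I, ← ofReal_cos, ← ofReal_sin]

lemma ofReal_mul_exp_eq_ofReal_mul_exp_iff {r s : ℝ} (hr : 0 < r) (hs : 0 < s) {φ ψ : ℝ} :
    (r : ℂ) * exp (φ * I) = s * exp (ψ * I) ↔ r = s ∧ ∃ n : ℤ, φ = ψ + 2 * π * n := by
  constructor
  · intro h
    have hrs : r = s := by
      simpa [norm_exp_ofReal_mul_I, abs_of_pos hr, abs_of_pos hs] using congrArg norm h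
    subst hrs
    obtain ⟨n, hn⟩ := exp_eq_exp_iff_exists_int.1 (mul_left_cancel₀ (ofReal_ne_zero.2 hr.ne') h)
    refine ⟨rfl, n, ?_⟩
    simpa [mul_comm, mul_left_comm] using congrArg im hn
  · rintro ⟨rfl, n, rfl⟩
    push_cast
    rw [add_mul, exp_add, show (2 * π * n : ℂ) * I = n * (2 * π * I) by ring,
      exp_int_mul_two_pi_mul_I, mul_one]

lemma eq_ofReal_mul_exp_iff {z : ℂ} {r ψ : ℝ} (hr : 0 < r) (hψ : ψ ∈ Ioc (-π) π) :
    z = r * exp (ψ * I) ↔ ‖z‖ = r ∧ arg z = ψ := by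
  rw [ext_norm_arg_iff, norm_mul, norm_exp_ofReal_mul_I, norm_real, Real.norm_of_nonneg hr.le,
    mul_one, arg_real_mul _ hr, exp_mul_I, arg_cos_add_sin_mul_I hψ]

lemma arg_mem_Ioo_of_im_pos {z : ℂ} (hz : 0 < z.im) : arg z ∈ Ioo 0 π :=
  ⟨(arg_nonneg_iff.2 hz.le).lt_of_ne fun h ↦ hz.ne' (arg_eq_zero_iff.1 h.symm).2,
    arg_lt_pi_iff.2 (Or.inr hz.ne')⟩

lemma im_ofReal_mul_exp_pos {r ψ : ℝ} (hr : 0 < r) (hψ : ψ ∈ Ioo 0 π) :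
    0 < ((r : ℂ) * exp (ψ * I)).im := by
  rw [im_ofReal_mul, exp_ofReal_mul_I_im]
  exact mul_pos hr (Real.sin_pos_of_pos_of_lt_pi hψ.1 hψ.2)

lemma conj_ofReal_mul_exp (r ψ : ℝ) :
    conj ((r : ℂ) * exp (ψ * I)) = -(r * exp (↑(π - ψ) * I)) := by
  rw [map_mul, conj_ofReal, ← exp_conj, map_mul, conj_ofReal, conj_I, ofReal_sub, sub_mul,
    exp_sub, exp_pi_mul_I, mul_neg, exp_neg]
  ring

end Complex

lemma exists_int_eq_add_two_pi_mul_iff {x θ : ℝ} (hx : 0 < x) (hxθ : x < θ + 6 * π)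
    (hθ : θ ≤ 2 * π) :
    (∃ n : ℤ, x = θ + 2 * π * n) ↔ x = θ ∨ x = θ + 2 * π ∨ x = θ + 4 * π := by
  constructor
  · rintro ⟨n, rfl⟩
    have hn₀ : 0 ≤ n := by
      by_contra! hn
      have : (n : ℝ) ≤ -1 := by exact_mod_cast Int.le_sub_one_of_lt hn
      nlinarith [Real.pi_pos]
    have hn₂ : n ≤ 2 := by
      by_contra! hn
      have : (3 : ℝ) ≤ n := by exact_mod_cast hn
      nlinarith [Real.pi_pos]
    interval_cases n
    exacts [Or.inl (by simp), Or.inr (Or.inl (by simp)), Or.inr (Or.inr (by push_cast; ring))]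
  · rintro (rfl | rfl | rfl)
    exacts [⟨0, by simp⟩, ⟨1, by simp⟩, ⟨2, by push_cast; ring⟩]

lemma mul_sq_sub_mul_cpow_mul_eq_zero_iff {z A : ℂ} (hz : z ≠ 0) (hA : A ≠ 0) (B c w : ℂ) :
    A * z ^ 2 - B * z ^ (2 - c) * w = 0 ↔ z ^ c = B / A * w := by
  have hsplit : z ^ 2 = z ^ (2 - c) * z ^ c := by
    rw [← cpow_add _ _ hz, sub_add_cancel, cpow_two]
  have hne : z ^ (2 - c) ≠ 0 := cpow_ne_zero_iff.2 (Or.inl hz)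
  rw [hsplit, show A * (z ^ (2 - c) * z ^ c) - B * z ^ (2 - c) * w
      = z ^ (2 - c) * (A * z ^ c - B * w) by ring, mul_eq_zero, or_iff_right hne, sub_eq_zero,
    div_mul_eq_mul_div, eq_div_iff hA, mul_comm]

lemma conj_mul_sq_sub_mul_cpow_mul_exp (A B c θ : ℝ) {z : ℂ} (hz : arg z ≠ π) :
    conj ((A : ℂ) * z ^ 2 - B * z ^ (2 - (c : ℂ)) * exp (θ * I)) =
      A * conj z ^ 2 - B * conj z ^ (2 - (c : ℂ)) * exp (-(θ * I)) := by
  have hpow : conj z ^ (2 - (c : ℂ)) = conj (z ^ (2 - (c : ℂ))) := by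
    simpa [map_ofNat] using conj_cpow z (2 - c) hz
  rw [hpow, map_sub, map_mul, map_mul, map_mul, map_pow, ← exp_conj]
  simp

lemma setOf_im_ne_zero_and_eq_zero_eq_union {f : ℂ → ℂ} {U : Set ℂ} (hU : ∀ w ∈ U, 0 < w.im)
    (hup : ∀ z, 0 < z.im → (f z = 0 ↔ z ∈ U))
    (hdown : ∀ z, z.im < 0 → (f z = 0 ↔ conj z ∈ U)) :
    {z | z.im ≠ 0 ∧ f z = 0} = U ∪ conj '' U := by
  have hmem_image : ∀ z, z ∈ conj '' U ↔ conj z ∈ U := fun z ↦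
    ⟨by rintro ⟨w, hw, rfl⟩; rwa [conj_conj], fun h ↦ ⟨conj z, h, conj_conj z⟩⟩
  ext z
  simp only [mem_ofPred_eq, mem_union, hmem_image]
  rcases lt_trichotomy z.im 0 with h | h | h
  · have : z ∉ U := fun hz ↦ (hU z hz).not_gt h
    simp [h.ne, hdown z h, this]
  · have h₁ : z ∉ U := fun hz ↦ (hU z hz).ne' h
    have h₂ : conj z ∉ U := fun hz ↦ (hU _ hz).ne' (by simp [h])
    simp [h, h₁, h₂]
  · have : conj z ∉ U := fun hz ↦ (hU _ hz).not_gt (by simpa using h)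
    simp [h.ne', hup z h, this]

section HalfPlaneZeros

lemma mem_Ioo_zero_pi_of_mul_mem_Icc {c θ ψ : ℝ} (hθ : 0 < θ) (hc₄ : θ + 4 * π < c * π)
    (hψ : c * ψ ∈ Icc θ (θ + 4 * π)) : ψ ∈ Ioo 0 π := by
  have hc : 0 < c := by nlinarith [Real.pi_pos]
  exact ⟨pos_of_mul_pos_right (hθ.trans_le hψ.1) hc.le,
    lt_of_mul_lt_mul_left (hψ.2.trans_lt hc₄) hc.le⟩

lemma three_angles_mem_Ioo_zero_pi {c θ ψ₀ ψ₁ ψ₂ : ℝ} (hθ : 0 < θ) (hc₄ : θ + 4 * π < c * π)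
    (hψ₀ : c * ψ₀ = θ) (hψ₁ : c * ψ₁ = θ + 2 * π) (hψ₂ : c * ψ₂ = θ + 4 * π) :
    ψ₀ ∈ Ioo 0 π ∧ ψ₁ ∈ Ioo 0 π ∧ ψ₂ ∈ Ioo 0 π := by
  have hπ := Real.pi_pos
  exact ⟨mem_Ioo_zero_pi_of_mul_mem_Icc hθ hc₄ ⟨hψ₀.ge, by linarith⟩,
    mem_Ioo_zero_pi_of_mul_mem_Icc hθ hc₄ ⟨by linarith, by linarith⟩,
    mem_Ioo_zero_pi_of_mul_mem_Icc hθ hc₄ ⟨by linarith, hψ₂.le⟩⟩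

variable {A B c θ ν ψ₀ ψ₁ ψ₂ : ℝ} (hA : 0 < A) (hν : 0 < ν) (hνc : ν ^ c = B / A)
  (hθ : 0 < θ) (hθ₂ : θ ≤ 2 * π) (hc₄ : θ + 4 * π < c * π) (hc₆ : c * π ≤ θ + 6 * π)
  (hψ₀ : c * ψ₀ = θ) (hψ₁ : c * ψ₁ = θ + 2 * π) (hψ₂ : c * ψ₂ = θ + 4 * π)
include hA hν hνc hθ hθ₂ hc₄ hc₆ hψ₀ hψ₁ hψ₂

theorem mul_sq_sub_mul_cpow_mul_exp_eq_zero_iff_of_im_pos {z : ℂ} (hz : 0 < z.im) :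
    (A : ℂ) * z ^ 2 - B * z ^ (2 - (c : ℂ)) * exp (θ * I) = 0 ↔
      z = ν * exp (ψ₀ * I) ∨ z = ν * exp (ψ₁ * I) ∨ z = ν * exp (ψ₂ * I) := by
  have hπ := Real.pi_pos
  have hc : 0 < c := by nlinarith
  have hz₀ : z ≠ 0 := fun h ↦ hz.ne' (by simp [h])
  have harg := arg_mem_Ioo_of_im_pos hz
  have hmem : ∀ ψ ∈ Ioo 0 π, ψ ∈ Ioc (-π) π := fun ψ hψ ↦ ⟨by linarith [hψ.1], hψ.2.le⟩
  obtain ⟨h₀, h₁, h₂⟩ := three_angles_mem_Ioo_zero_pi hθ hc₄ hψ₀ hψ₁ hψ₂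
  rw [mul_sq_sub_mul_cpow_mul_eq_zero_iff hz₀ (ofReal_ne_zero.2 hA.ne'), ← ofReal_div, ← hνc,
    cpow_ofReal_eq_mul_exp, ofReal_mul_exp_eq_ofReal_mul_exp_iff
      (Real.rpow_pos_of_pos (norm_pos_iff.2 hz₀) c) (Real.rpow_pos_of_pos hν c),
    Real.rpow_left_inj (norm_nonneg z) hν.le hc.ne', mul_comm (arg z),
    exists_int_eq_add_two_pi_mul_iff (mul_pos hc harg.1) (by nlinarith [harg.2]) hθ₂,
    ← hψ₂, ← hψ₁, ← hψ₀, mul_right_inj' hc.ne', mul_right_inj' hc.ne', mul_right_inj' hc.ne',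
    eq_ofReal_mul_exp_iff hν (hmem ψ₀ h₀), eq_ofReal_mul_exp_iff hν (hmem ψ₁ h₁),
    eq_ofReal_mul_exp_iff hν (hmem ψ₂ h₂), and_or_left, and_or_left]

theorem setOf_im_ne_zero_and_eq_zero_of_eq_mul_sq_sub_mul_cpow_mul_exp (Λ : ℂ → ℂ)
    (hup : ∀ z : ℂ, 0 < z.im → Λ z = A * z ^ 2 - B * z ^ (2 - (c : ℂ)) * exp (θ * I))
    (hdown : ∀ z : ℂ, z.im < 0 → Λ z = A * z ^ 2 - B * z ^ (2 - (c : ℂ)) * exp (-(θ * I))) :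
    {z | z.im ≠ 0 ∧ Λ z = 0} =
      {(ν : ℂ) * exp (ψ₀ * I), ν * exp (ψ₁ * I), ν * exp (ψ₂ * I)} ∪
        conj '' {(ν : ℂ) * exp (ψ₀ * I), ν * exp (ψ₁ * I), ν * exp (ψ₂ * I)} := by
  have hzeros := fun z ↦
    mul_sq_sub_mul_cpow_mul_exp_eq_zero_iff_of_im_pos hA hν hνc hθ hθ₂ hc₄ hc₆ hψ₀ hψ₁ hψ₂ (z := z)
  obtain ⟨h₀, h₁, h₂⟩ := three_angles_mem_Ioo_zero_pi hθ hc₄ hψ₀ hψ₁ hψ₂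
  refine setOf_im_ne_zero_and_eq_zero_eq_union ?_ (fun z hz ↦ by rw [hup z hz, hzeros z hz]; rfl)
    fun z hz ↦ ?_
  · rintro w (rfl | rfl | rfl)
    exacts [im_ofReal_mul_exp_pos hν h₀, im_ofReal_mul_exp_pos hν h₁, im_ofReal_mul_exp_pos hν h₂]
  · have hz' : 0 < (conj z).im := by simpa using hz
    rw [hdown z hz, ← conj_conj z, ← conj_mul_sq_sub_mul_cpow_mul_exp A B c θ
      (arg_lt_pi_iff.2 (Or.inr hz'.ne')).ne, map_eq_zero, hzeros _ hz', conj_conj]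
    rfl

end HalfPlaneZeros

/-- **Zeros of the structural function of the eigenproblem for integrated
fractional Brownian motion, case `H > 1/2`** (`α ∈ (0,1)`): the function
`Λ(z) = (λΓ(α)/c_α) z² - (π/cos(πα/2)) z^{α-3} e^{±(1-α)πi/2}` has exactly six
zeros off the real line, namely `±iν`, `±ν e^{i(π/2)(1-α)/(5-α)}` and
`±ν e^{i(π/2)(9-α)/(5-α)}`, where `ν > 0` satisfies
`ν^{α-5} = (λΓ(α)/c_α) cos(πα/2)/π`. -/
theorem ifbm_structural_function_zeros_large_H
    (α lam : ℝ) (hα : α ∈ Set.Ioo (0 : ℝ) 1) (hlam : 0 < lam)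
    (cα : ℝ) (hcα : cα = (1 - α / 2) * (1 - α))
    (Λ : ℂ → ℂ)
    (hup : ∀ z : ℂ, 0 < z.im → Λ z =
      ((lam * Real.Gamma α / cα : ℝ) : ℂ) * z ^ 2 -
        ((π / Real.cos (π * α / 2) : ℝ) : ℂ) * z ^ ((α : ℂ) - 3) *
          Complex.exp ((((1 - α) * π / 2 : ℝ) : ℂ) * Complex.I))
    (hdown : ∀ z : ℂ, z.im < 0 → Λ z =
      ((lam * Real.Gamma α / cα : ℝ) : ℂ) * z ^ 2 -
        ((π / Real.cos (π * α / 2) : ℝ) : ℂ) * z ^ ((α : ℂ) - 3) *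
          Complex.exp (-((((1 - α) * π / 2 : ℝ) : ℂ) * Complex.I)))
    (ν : ℝ) (hν : 0 < ν)
    (hνeq : ν ^ (α - 5) = (lam * Real.Gamma α / cα) * Real.cos (π * α / 2) / π) :
    {z : ℂ | z.im ≠ 0 ∧ Λ z = 0} =
      {(ν : ℂ) * Complex.I, -((ν : ℂ) * Complex.I),
        (ν : ℂ) * Complex.exp ((((π / 2) * (1 - α) / (5 - α) : ℝ) : ℂ) * Complex.I),
        -((ν : ℂ) * Complex.exp ((((π / 2) * (1 - α) / (5 - α) : ℝ) : ℂ) * Complex.I)),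
        (ν : ℂ) * Complex.exp ((((π / 2) * (9 - α) / (5 - α) : ℝ) : ℂ) * Complex.I),
        -((ν : ℂ) * Complex.exp ((((π / 2) * (9 - α) / (5 - α) : ℝ) : ℂ) * Complex.I))} := by
  obtain ⟨hα₀, hα₁⟩ := hα
  have hπ := Real.pi_pos
  have hA : 0 < lam * Real.Gamma α / cα :=
    div_pos (mul_pos hlam (Real.Gamma_pos_of_pos hα₀)) (by rw [hcα]; nlinarith)
  have hcos : 0 < Real.cos (π * α / 2) := Real.cos_pos_of_mem_Ioo ⟨by nlinarith, by nlinarith⟩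
  have hνc : ν ^ (5 - α) = π / Real.cos (π * α / 2) / (lam * Real.Gamma α / cα) := by
    rw [show 5 - α = -(α - 5) by ring, Real.rpow_neg hν.le, hνeq]
    field_simp
  have h5 : (5 : ℝ) - α ≠ 0 := by linarith
  have hI : exp (((π / 2 : ℝ) : ℂ) * I) = I := by push_cast; exact exp_pi_div_two_mul_I
  rw [show (α : ℂ) - 3 = 2 - ((5 - α : ℝ) : ℂ) by push_cast; ring] at hup hdown
  rw [setOf_im_ne_zero_and_eq_zero_of_eq_mul_sq_sub_mul_cpow_mul_exp hA hν hνc (ψ₀ := π / 2 * (1 - α) / (5 - α))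
    (ψ₁ := π / 2) (ψ₂ := π / 2 * (9 - α) / (5 - α)) (by nlinarith) (by nlinarith)
    (by nlinarith) (by nlinarith) (by field_simp) (by field_simp; ring)
    (by field_simp; ring) Λ hup hdown]
  simp only [image_insert_eq, image_singleton, conj_ofReal_mul_exp]
  rw [show π - π / 2 * (1 - α) / (5 - α) = π / 2 * (9 - α) / (5 - α) by field_simp; ring,
    show π - π / 2 * (9 - α) / (5 - α) = π / 2 * (1 - α) / (5 - α) by field_simp; ring,
    show π - π / 2 = π / 2 by ring, hI]
  ext z
  simp only [mem_union, mem_insert_iff, mem_singleton_iff]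
  tauto
end

section
/- Let α∈(1,2), λ>0 and c_α=(1−α/2)(1−α)<0. Define Λ on ℂ∖ℝ by Λ(z) = (λΓ(α)/|c_α|)z² − (π/|cos(πα/2)|)·z^{α−3}·e^{(1−α)πi/2} for Im(z)>0, and with e^{−(1−α)πi/2} for Im(z)<0 (principal branch powers). Then Λ has exactly two zeros in ℂ∖ℝ, namely z = iν and z = −iν, where ν>0 is determined by ν^{α−5} = (λΓ(α)/|c_α|)·|cos(πα/2)|/π. -/
open Complex
open scoped Real ComplexConjugate

/-! Writing `z = r e^{iφ}` with `φ = arg z`, the equation `A z² = B z^{α-3} e^{iθ}` splits into the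
modulus equation `r^{5-α} = B/A`, solved only by `r = ν`, and the phase equation
`(5-α) φ ≡ θ (mod 2π)`. For `θ = (1-α)π/2` and `φ ∈ [0, π)` the phase equation forces `φ = π/2`,
because `1 < α < 2` leaves room for exactly one multiple of `2π`. The lower half-plane is the mirror
image of the upper one under complex conjugation, since `conj (z ^ p) = (conj z) ^ p` for real `p`
off the negative real axis. -/

theorem ofReal_mul_sq_eq_ofReal_mul_cpow_mul_exp_iff {A B p θ : ℝ} (hA : 0 < A) (hB : 0 < B)
    {z : ℂ} (hz : z ≠ 0) :
    (A : ℂ) * z ^ 2 = B * z ^ (p : ℂ) * exp (θ * I) ↔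
      ‖z‖ ^ (2 - p) = B / A ∧ ∃ n : ℤ, (2 - p) * arg z = θ + 2 * π * n := by
  have hr : 0 < ‖z‖ := norm_pos_iff.mpr hz
  have hnorm : ‖z‖ ^ (2 - p) = B / A ↔
      Real.log A + Real.log ‖z‖ * 2 = Real.log B + Real.log ‖z‖ * p := by
    rw [← Real.log_injOn_pos.eq_iff (Real.rpow_pos_of_pos hr _) (div_pos hB hA),
      Real.log_rpow hr, Real.log_div hB.ne' hA.ne']
    constructor <;> intro h <;> linarith
  have hexp_log : ∀ {C : ℝ}, 0 < C → (C : ℂ) = exp (Real.log C) := fun hC => by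
    rw [← ofReal_exp, Real.exp_log hC]
  have hsq : z ^ 2 = exp (log z * 2) := by rw [← cpow_def_of_ne_zero hz, cpow_ofNat]
  rw [hnorm, hsq, cpow_def_of_ne_zero hz, hexp_log hA, hexp_log hB, ← exp_add, ← exp_add,
    ← exp_add, exp_eq_exp_iff_exists_int, ← exists_and_left]
  refine exists_congr fun n => ?_
  simp only [Complex.ext_iff, add_re, add_im, mul_re, mul_im, ofReal_re, ofReal_im, log_re,
    log_im, re_ofNat, im_ofNat, intCast_re, intCast_im, I_re, I_im]
  refine and_congr (by ring_nf) ⟨fun h => ?_, fun h => ?_⟩ <;> linarith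

theorem exists_int_angle_eq_iff_eq_pi_div_two {α φ : ℝ} (hα1 : 1 < α) (hα2 : α < 2)
    (hφ0 : 0 ≤ φ) (hφπ : φ < π) :
    (∃ n : ℤ, (5 - α) * φ = (1 - α) * π / 2 + 2 * π * n) ↔ φ = π / 2 := by
  constructor
  · rintro ⟨n, hn⟩
    have hn1 : n = 1 := by
      have hpos : 0 < n := by exact_mod_cast (by nlinarith [Real.pi_pos] : (0 : ℝ) < n)
      have hlt : n < 2 := by exact_mod_cast (by nlinarith [Real.pi_pos] : (n : ℝ) < 2)
      omega
    subst hn1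
    nlinarith [Real.pi_pos]
  · rintro rfl
    exact ⟨1, by push_cast; ring⟩

section

variable {α A B ν : ℝ} (hα1 : 1 < α) (hα2 : α < 2) (hA : 0 < A) (hB : 0 < B) (hν : 0 < ν)
  (hνAB : ν ^ (5 - α) = B / A)
include hα1 hα2 hA hB hν hνAB

theorem sub_eq_zero_iff_eq_ofReal_mul_I_of_im_pos {z : ℂ} (hz : 0 < z.im) :
    (A : ℂ) * z ^ 2 - B * z ^ ((α : ℂ) - 3) * exp (((1 - α) * π / 2 : ℝ) * I) = 0 ↔
      z = ν * I := by
  have hz0 : z ≠ 0 := fun h => by simp [h] at hz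
  rw [sub_eq_zero, show (α : ℂ) - 3 = ((α - 3 : ℝ) : ℂ) by push_cast; ring,
    ofReal_mul_sq_eq_ofReal_mul_cpow_mul_exp_iff hA hB hz0,
    show (2 : ℝ) - (α - 3) = 5 - α by ring, ← hνAB,
    Real.rpow_left_inj (norm_nonneg z) hν.le (by linarith),
    exists_int_angle_eq_iff_eq_pi_div_two hα1 hα2 (arg_nonneg_iff.mpr hz.le)
      (arg_lt_pi_iff.mpr (Or.inr hz.ne')),
    ext_norm_arg_iff, arg_real_mul I hν, arg_I]
  simp [abs_of_pos hν]

theorem sub_eq_zero_iff_eq_neg_ofReal_mul_I_of_im_neg {z : ℂ} (hz : z.im < 0) :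
    (A : ℂ) * z ^ 2 - B * z ^ ((α : ℂ) - 3) * exp (-(((1 - α) * π / 2 : ℝ) * I)) = 0 ↔
      z = -(ν * I) := by
  have hconj : z ^ ((α : ℂ) - 3) = conj (conj z ^ ((α : ℂ) - 3)) := by
    have := cpow_conj z ((α : ℂ) - 3) ((arg_neg_iff.mpr hz).trans Real.pi_pos).ne
    rwa [map_sub, conj_ofReal, map_ofNat] at this
  have hconj_im : 0 < (conj z).im := by simpa using hz
  have hexpr : (A : ℂ) * z ^ 2 - B * z ^ ((α : ℂ) - 3) * exp (-(((1 - α) * π / 2 : ℝ) * I)) =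
      conj ((A : ℂ) * conj z ^ 2 - B * conj z ^ ((α : ℂ) - 3) *
        exp (((1 - α) * π / 2 : ℝ) * I)) := by
    rw [hconj]
    simp only [map_sub, map_mul, map_pow, conj_ofReal, conj_conj, ← exp_conj, conj_I, mul_neg]
  rw [hexpr, map_eq_zero,
    sub_eq_zero_iff_eq_ofReal_mul_I_of_im_pos hα1 hα2 hA hB hν hνAB hconj_im]
  simp [Complex.ext_iff, neg_eq_iff_eq_neg]

end

/-- **Zeros of the structural function of the eigenproblem for integrated
fractional Brownian motion, case `H < 1/2`** (`α ∈ (1,2)`): the function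
`Λ(z) = (λΓ(α)/|c_α|) z² - (π/|cos(πα/2)|) z^{α-3} e^{±(1-α)πi/2}` has exactly two
zeros off the real line, namely `±iν`, where `ν > 0` satisfies
`ν^{α-5} = (λΓ(α)/|c_α|) |cos(πα/2)|/π`. -/
theorem ifbm_structural_function_zeros_small_H
    (α lam : ℝ) (hα : α ∈ Set.Ioo (1 : ℝ) 2) (hlam : 0 < lam)
    (cα : ℝ) (hcα : cα = (1 - α / 2) * (1 - α))
    (Λ : ℂ → ℂ)
    (hup : ∀ z : ℂ, 0 < z.im → Λ z =
      ((lam * Real.Gamma α / |cα| : ℝ) : ℂ) * z ^ 2 -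
        ((π / |Real.cos (π * α / 2)| : ℝ) : ℂ) * z ^ ((α : ℂ) - 3) *
          Complex.exp ((((1 - α) * π / 2 : ℝ) : ℂ) * Complex.I))
    (hdown : ∀ z : ℂ, z.im < 0 → Λ z =
      ((lam * Real.Gamma α / |cα| : ℝ) : ℂ) * z ^ 2 -
        ((π / |Real.cos (π * α / 2)| : ℝ) : ℂ) * z ^ ((α : ℂ) - 3) *
          Complex.exp (-((((1 - α) * π / 2 : ℝ) : ℂ) * Complex.I)))
    (ν : ℝ) (hν : 0 < ν)
    (hνeq : ν ^ (α - 5) =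
      (lam * Real.Gamma α / |cα|) * |Real.cos (π * α / 2)| / π) :
    {z : ℂ | z.im ≠ 0 ∧ Λ z = 0} =
      {(ν : ℂ) * Complex.I, -((ν : ℂ) * Complex.I)} := by
  obtain ⟨hα1, hα2⟩ := hα
  set A := lam * Real.Gamma α / |cα|
  set B := π / |Real.cos (π * α / 2)|
  have hcα0 : cα ≠ 0 := by rw [hcα]; exact mul_ne_zero (by linarith) (by linarith)
  have hcos : Real.cos (π * α / 2) < 0 :=
    Real.cos_neg_of_pi_div_two_lt_of_lt (by nlinarith [Real.pi_pos]) (by nlinarith [Real.pi_pos])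
  have hA : 0 < A := div_pos (mul_pos hlam (Real.Gamma_pos_of_pos (by linarith)))
    (abs_pos.mpr hcα0)
  have hB : 0 < B := div_pos Real.pi_pos (abs_pos.mpr hcos.ne)
  have hνAB : ν ^ (5 - α) = B / A := by
    rw [show 5 - α = -(α - 5) by ring, Real.rpow_neg hν.le, hνeq, inv_div, div_div, mul_comm]
  have hupper : ∀ z : ℂ, 0 < z.im → (Λ z = 0 ↔ z = ν * I) := fun z hz => by
    rw [hup z hz]; exact sub_eq_zero_iff_eq_ofReal_mul_I_of_im_pos hα1 hα2 hA hB hν hνAB hz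
  have hlower : ∀ z : ℂ, z.im < 0 → (Λ z = 0 ↔ z = -(ν * I)) := fun z hz => by
    rw [hdown z hz]; exact sub_eq_zero_iff_eq_neg_ofReal_mul_I_of_im_neg hα1 hα2 hA hB hν hνAB hz
  ext z
  constructor
  · rintro ⟨hz, hΛ⟩
    rcases hz.lt_or_gt with hz | hz
    · exact Or.inr ((hlower z hz).mp hΛ)
    · exact Or.inl ((hupper z hz).mp hΛ)
  · rintro (rfl | rfl)
    · have hz : 0 < ((ν : ℂ) * I).im := by simpa using hν
      exact ⟨hz.ne', (hupper _ hz).mpr rfl⟩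
    · have hz : (-((ν : ℂ) * I)).im < 0 := by simpa using hν
      exact ⟨hz.ne, (hlower _ hz).mpr rfl⟩
end

section
/- Let H∈(1/2,1), set α=2−2H∈(0,1) and c_α=(1−α/2)(1−α), let β∈ℝ and λ>0, and suppose the continuous function φ:[0,1]→ℝ satisfies the eigenproblem ∫₀¹ (∫₀ˣ∫₀ʸ e^{β(x−u)}e^{β(y−v)} c_α|u−v|^{−α} dv du) φ(y) dy = λφ(x) for all x∈[0,1]. Define ψ(x) = e^{−βx}∫ₓ¹ e^{βr}φ(r)dr. Then ψ is twice continuously differentiable, satisfies ∫₀¹ c_α|x−y|^{−α} ψ(y) dy = λ(β²ψ(x) − ψ''(x)) for all x∈[0,1], and obeys the boundary conditions ψ(1)=0 and ψ'(0)+βψ(0)=0. -/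
/-!
Write the covariance kernel as `K(x,y) = ∫₀ˣ e^{β(x-u)} R(u,y) du` with
`R(u,y) = ∫₀ʸ e^{β(y-v)} k(u-v) dv`, where `k = c_α|·|^{-α}`. Swapping the `u`- and `y`-integrals
turns the eigenproblem into the variation-of-constants formula `λφ(x) = ∫₀ˣ e^{β(x-u)} B(u) du`
with `B = ∫₀¹ R(·,y) φ(y) dy` continuous, so `φ` extends to a `C¹` function with
`λ(φ' - βφ) = B` and `φ(0) = 0`. As `ψ' = -βψ - φ`, this gives `λ(β²ψ - ψ'') = B`, and Fubini over
the triangle `{v < r}` identifies `∫₀¹ k(x-y) ψ(y) dy` with `B(x)` as well. Finally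
`ψ'(0) + βψ(0) = -φ(0) = 0`.

The singularity of `k` is harmless since `k` is locally integrable for `α < 1`; `R` is jointly
continuous because it can be written through a primitive of `w ↦ e^{βw} k(w)`.
-/

open MeasureTheory Set Real Function

theorem intervalIntegrable_abs_rpow {r : ℝ} (hr : -1 < r) (a b : ℝ) :
    IntervalIntegrable (fun t : ℝ => |t| ^ r) volume a b := by
  have of_nonneg : ∀ c, 0 ≤ c → IntervalIntegrable (fun t : ℝ => |t| ^ r) volume 0 c := by
    intro c hc
    refine (intervalIntegral.intervalIntegrable_rpow' hr).congr fun t ht => ?_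
    rw [uIoc_of_le hc] at ht
    rw [abs_of_pos ht.1]
  have from_zero : ∀ c, IntervalIntegrable (fun t : ℝ => |t| ^ r) volume 0 c := by
    intro c
    rcases le_total 0 c with hc | hc
    · exact of_nonneg c hc
    · rw [IntervalIntegrable.iff_comp_neg]
      simpa only [abs_neg, neg_zero] using of_nonneg (-c) (neg_nonneg.mpr hc)
  exact (from_zero a).symm.trans (from_zero b)

theorem continuous_intervalIntegral_comp_sub {g : ℝ → ℝ}
    (hg : ∀ a b, IntervalIntegrable g volume a b) (a : ℝ) :
    Continuous fun p : ℝ × ℝ => ∫ v in a..p.2, g (p.1 - v) := by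
  have hG : Continuous fun t => ∫ w in (0 : ℝ)..t, g w :=
    intervalIntegral.continuous_primitive hg 0
  have h_eq : (fun p : ℝ × ℝ => ∫ v in a..p.2, g (p.1 - v)) =
      fun p => (∫ w in (0 : ℝ)..p.1 - a, g w) - ∫ w in (0 : ℝ)..p.1 - p.2, g w := by
    ext p
    rw [intervalIntegral.integral_comp_sub_left,
      intervalIntegral.integral_interval_sub_left (hg _ _) (hg _ _)]
  rw [h_eq]
  fun_prop

theorem continuous_intervalIntegral_mul_of_continuousOn {K : ℝ → ℝ → ℝ}
    (hK : Continuous (uncurry K)) {φ : ℝ → ℝ} {a b : ℝ} (hab : a ≤ b)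
    (hφ : ContinuousOn φ (Icc a b)) : Continuous fun u => ∫ y in a..b, K u y * φ y := by
  obtain ⟨φ', hφ', h_ext⟩ : ∃ φ' : ℝ → ℝ, Continuous φ' ∧ EqOn φ φ' (Icc a b) :=
    ⟨IccExtend hab (domRestrict (Icc a b) φ), hφ.domRestrict.Icc_extend',
      fun y hy => (IccExtend_of_mem hab (domRestrict (Icc a b) φ) hy).symm⟩
  have h_eq : ∀ u, ∫ y in a..b, K u y * φ y = ∫ y in a..b, K u y * φ' y := fun u =>
    intervalIntegral.integral_congr fun y hy => by
      rw [uIcc_of_le hab] at hy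
      rw [h_ext hy]
  simp only [h_eq]
  exact intervalIntegral.continuous_parametric_intervalIntegral_of_continuous'
    (hK.mul (hφ'.comp continuous_snd)) a b

theorem integral_indicator_Ioi {f : ℝ → ℝ} {a b y : ℝ} (hy : y ∈ Icc a b) :
    ∫ r in a..b, (Ioi y).indicator f r = ∫ r in y..b, f r := by
  rw [intervalIntegral.integral_of_le (hy.1.trans hy.2), intervalIntegral.integral_of_le hy.2,
    integral_indicator measurableSet_Ioi, Measure.restrict_restrict measurableSet_Ioi,
    inter_comm, Ioc_inter_Ioi, sup_of_le_right hy.1]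

theorem integral_indicator_Iio {f : ℝ → ℝ} {a b r : ℝ} (hr : r ∈ Icc a b) :
    ∫ y in a..b, (Iio r).indicator f y = ∫ y in a..r, f y := by
  rw [intervalIntegral.integral_of_le (hr.1.trans hr.2), intervalIntegral.integral_of_le hr.1,
    integral_indicator measurableSet_Iio, Measure.restrict_restrict measurableSet_Iio,
    integral_Ioc_eq_integral_Ioo]
  congr 2
  ext t
  simp only [mem_inter_iff, mem_Iio, mem_Ioc, mem_Ioo]
  grind

theorem integral_mul_integral_tail_eq {F G : ℝ → ℝ} {a b : ℝ} (hab : a ≤ b)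
    (hF : IntervalIntegrable F volume a b) (hG : IntervalIntegrable G volume a b) :
    ∫ y in a..b, F y * ∫ r in y..b, G r = ∫ r in a..b, (∫ y in a..r, F y) * G r := by
  set h : ℝ × ℝ → ℝ := {p : ℝ × ℝ | p.1 < p.2}.indicator fun p => F p.1 * G p.2
  have h_int : IntegrableOn (uncurry fun y r => h (y, r)) (uIoc a b ×ˢ uIoc a b) := by
    rw [IntegrableOn, Measure.volume_eq_prod, ← Measure.prod_restrict]
    exact (hF.def'.mul_prod hG.def').indicator (measurableSet_lt measurable_fst measurable_snd)
  have h_fst : ∀ y r, h (y, r) = (Ioi y).indicator (fun r => F y * G r) r := fun y r => by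
    simp only [h, indicator_apply, mem_ofPred_eq, mem_Ioi]
  have h_snd : ∀ y r, h (y, r) = (Iio r).indicator (fun y => F y * G r) y := fun y r => by
    simp only [h, indicator_apply, mem_ofPred_eq, mem_Iio]
  calc ∫ y in a..b, F y * ∫ r in y..b, G r
      = ∫ y in a..b, ∫ r in a..b, h (y, r) := intervalIntegral.integral_congr fun y hy => by
        rw [uIcc_of_le hab] at hy
        simp only [h_fst, integral_indicator_Ioi hy, intervalIntegral.integral_const_mul]
    _ = ∫ r in a..b, ∫ y in a..b, h (y, r) := intervalIntegral_intervalIntegral_swap h_int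
    _ = ∫ r in a..b, (∫ y in a..r, F y) * G r := intervalIntegral.integral_congr fun r hr => by
        rw [uIcc_of_le hab] at hr
        simp only [h_snd, integral_indicator_Iio hr, intervalIntegral.integral_mul_const]

theorem contDiff_two_of_hasDerivAt {f f' f'' : ℝ → ℝ} (hf : ∀ x, HasDerivAt f (f' x) x)
    (hf' : ∀ x, HasDerivAt f' (f'' x) x) (hf'' : Continuous f'') : ContDiff ℝ 2 f := by
  rw [show (2 : WithTop ℕ∞) = 1 + 1 from rfl, contDiff_succ_iff_deriv,
    funext fun x => (hf x).deriv]
  refine ⟨fun x => (hf x).differentiableAt, by simp, ?_⟩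
  rw [contDiff_one_iff_deriv, funext fun x => (hf' x).deriv]
  exact ⟨fun x => (hf' x).differentiableAt, hf''⟩

theorem iteratedDerivWithin_two_eq_of_hasDerivAt {f f' f'' : ℝ → ℝ}
    (hf : ∀ x, HasDerivAt f (f' x) x) (hf' : ∀ x, HasDerivAt f' (f'' x) x) {s : Set ℝ}
    (hs : UniqueDiffOn ℝ s) {x : ℝ} (hx : x ∈ s) : iteratedDerivWithin 2 f s x = f'' x := by
  have h_one : EqOn (iteratedDerivWithin 1 f s) f' s := fun y hy => by
    rw [iteratedDerivWithin_one, (hf y).hasDerivWithinAt.derivWithin (hs y hy)]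
  rw [iteratedDerivWithin_succ, derivWithin_congr h_one (h_one hx),
    (hf' x).hasDerivWithinAt.derivWithin (hs x hx)]

noncomputable def duhamel (β a : ℝ) (f : ℝ → ℝ) (x : ℝ) : ℝ :=
  ∫ u in a..x, exp (β * (x - u)) * f u

theorem duhamel_eq_exp_mul (β a : ℝ) (f : ℝ → ℝ) (x : ℝ) :
    duhamel β a f x = exp (β * x) * ∫ u in a..x, exp (-(β * u)) * f u := by
  rw [duhamel, ← intervalIntegral.integral_const_mul]
  congr 1 with u
  rw [mul_sub, sub_eq_add_neg, exp_add, mul_assoc]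

theorem hasDerivAt_duhamel {f : ℝ → ℝ} (hf : Continuous f) (β a x : ℝ) :
    HasDerivAt (duhamel β a f) (β * duhamel β a f x + f x) x := by
  have h_exp : HasDerivAt (fun t => exp (β * t)) (exp (β * x) * β) x :=
    ((hasDerivAt_id x).const_mul β).exp.congr_deriv (by simp [mul_comm])
  have h_cont : Continuous fun u => exp (-(β * u)) * f u := by fun_prop
  have h_int := (h_cont.integral_hasStrictDerivAt a x).hasDerivAt
  rw [show duhamel β a f = _ from funext (duhamel_eq_exp_mul β a f)]
  refine (h_exp.mul h_int).congr_deriv ?_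
  rw [← mul_assoc, ← exp_add, add_neg_cancel, exp_zero]
  ring

theorem exp_mul_integral_tail_eq_neg_duhamel {β a b : ℝ} {φ Φ : ℝ → ℝ}
    (h : EqOn φ Φ (Icc a b)) {x : ℝ} (hx : x ∈ Icc a b) :
    exp (-(β * x)) * ∫ r in x..b, exp (β * r) * φ r = -duhamel (-β) b Φ x := by
  rw [duhamel_eq_exp_mul, intervalIntegral.integral_symm b, mul_neg]
  simp only [neg_mul, neg_neg]
  congr 2
  refine intervalIntegral.integral_congr fun r hr => ?_
  rw [uIcc_of_ge hx.2] at hr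
  rw [h ⟨hx.1.trans hr.1, hr.2⟩]

noncomputable def covKernel (k : ℝ → ℝ) (β x y : ℝ) : ℝ :=
  ∫ u in (0 : ℝ)..x, ∫ v in (0 : ℝ)..y, exp (β * (x - u)) * exp (β * (y - v)) * k (u - v)

noncomputable def crossKernel (k : ℝ → ℝ) (β u y : ℝ) : ℝ :=
  ∫ v in (0 : ℝ)..y, exp (β * (y - v)) * k (u - v)

noncomputable def crossIntegral (k : ℝ → ℝ) (β : ℝ) (φ : ℝ → ℝ) (u : ℝ) : ℝ :=
  ∫ y in (0 : ℝ)..1, crossKernel k β u y * φ y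

section crossKernel

variable {k : ℝ → ℝ} (β : ℝ)

theorem crossKernel_eq_exp_mul (u y : ℝ) :
    crossKernel k β u y = exp (β * y) * ∫ v in (0 : ℝ)..y, exp (-(β * v)) * k (u - v) :=
  duhamel_eq_exp_mul β 0 (fun v => k (u - v)) y

theorem continuous_crossKernel (hk : ∀ a b, IntervalIntegrable k volume a b) :
    Continuous (uncurry (crossKernel k β)) := by
  set g : ℝ → ℝ := fun w => exp (β * w) * k w
  have hg : ∀ a b, IntervalIntegrable g volume a b := fun a b =>
    (hk a b).continuousOn_mul (by fun_prop)
  have h_eq : uncurry (crossKernel k β) =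
      fun p : ℝ × ℝ => exp (β * (p.2 - p.1)) * ∫ v in (0 : ℝ)..p.2, g (p.1 - v) := by
    ext ⟨u, y⟩
    rw [uncurry_apply_pair, crossKernel, ← intervalIntegral.integral_const_mul]
    congr 1 with v
    rw [← mul_assoc, ← exp_add]
    ring_nf
  rw [h_eq]
  exact (by fun_prop : Continuous _).mul (continuous_intervalIntegral_comp_sub hg 0)

theorem continuous_crossIntegral (hk : ∀ a b, IntervalIntegrable k volume a b) {φ : ℝ → ℝ}
    (hφ : ContinuousOn φ (Icc 0 1)) : Continuous (crossIntegral k β φ) :=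
  continuous_intervalIntegral_mul_of_continuousOn (continuous_crossKernel β hk) zero_le_one hφ

theorem integral_covKernel_mul_eq_duhamel (hk : ∀ a b, IntervalIntegrable k volume a b)
    {φ : ℝ → ℝ} (hφ : ContinuousOn φ (Icc 0 1)) {x : ℝ} (hx : x ∈ Icc (0 : ℝ) 1) :
    ∫ y in (0 : ℝ)..1, covKernel k β x y * φ y = duhamel β 0 (crossIntegral k β φ) x := by
  have h_inner : ∀ u y,
      ∫ v in (0 : ℝ)..y, exp (β * (x - u)) * exp (β * (y - v)) * k (u - v) =
        exp (β * (x - u)) * crossKernel k β u y := fun u y => by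
    simp only [crossKernel, ← intervalIntegral.integral_const_mul, mul_assoc]
  have h_int : IntegrableOn (uncurry fun y u => exp (β * (x - u)) * crossKernel k β u y * φ y)
      (uIoc 0 1 ×ˢ uIoc 0 x) := by
    rw [uIoc_of_le zero_le_one, uIoc_of_le hx.1]
    refine (ContinuousOn.integrableOn_compact (isCompact_Icc.prod isCompact_Icc) ?_).mono_set
      (prod_mono Ioc_subset_Icc_self Ioc_subset_Icc_self)
    exact ((by fun_prop : Continuous fun p : ℝ × ℝ => exp (β * (x - p.2))).mul
      ((continuous_crossKernel β hk).comp continuous_swap)).continuousOn.mul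
      (hφ.comp continuousOn_fst fun p hp => hp.1)
  calc ∫ y in (0 : ℝ)..1, covKernel k β x y * φ y
      = ∫ y in (0 : ℝ)..1, ∫ u in (0 : ℝ)..x,
          exp (β * (x - u)) * crossKernel k β u y * φ y := by
        simp only [covKernel, h_inner, intervalIntegral.integral_mul_const]
    _ = ∫ u in (0 : ℝ)..x, ∫ y in (0 : ℝ)..1,
          exp (β * (x - u)) * crossKernel k β u y * φ y :=
        intervalIntegral_intervalIntegral_swap h_int
    _ = duhamel β 0 (crossIntegral k β φ) x := by
        simp only [duhamel, crossIntegral, mul_assoc, intervalIntegral.integral_const_mul]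

theorem integral_kernel_mul_tail_eq_crossIntegral (hk : ∀ a b, IntervalIntegrable k volume a b)
    {φ : ℝ → ℝ} (hφ : ContinuousOn φ (Icc 0 1)) (x : ℝ) :
    ∫ y in (0 : ℝ)..1, k (x - y) * (exp (-(β * y)) * ∫ r in y..1, exp (β * r) * φ r) =
      crossIntegral k β φ x := by
  have hF : IntervalIntegrable (fun y => exp (-(β * y)) * k (x - y)) volume 0 1 := by
    have h_shift : IntervalIntegrable (fun y => k (x - y)) volume 0 1 := by
      simpa using (hk (x - 0) (x - 1)).comp_sub_left x
    exact h_shift.continuousOn_mul (by fun_prop)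
  have hG : IntervalIntegrable (fun r => exp (β * r) * φ r) volume 0 1 :=
    ((by fun_prop : Continuous fun r => exp (β * r)).continuousOn.mul
      hφ).intervalIntegrable_of_Icc zero_le_one
  calc ∫ y in (0 : ℝ)..1, k (x - y) * (exp (-(β * y)) * ∫ r in y..1, exp (β * r) * φ r)
      = ∫ y in (0 : ℝ)..1, exp (-(β * y)) * k (x - y) * ∫ r in y..1, exp (β * r) * φ r :=
        intervalIntegral.integral_congr fun y _ => by ring
    _ = ∫ r in (0 : ℝ)..1,
          (∫ y in (0 : ℝ)..r, exp (-(β * y)) * k (x - y)) * (exp (β * r) * φ r) :=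
        integral_mul_integral_tail_eq zero_le_one hF hG
    _ = crossIntegral k β φ x := intervalIntegral.integral_congr fun r _ => by
        rw [crossKernel_eq_exp_mul]
        ring

end crossKernel

theorem generalized_eigenproblem_of_covKernel_eigenproblem {k : ℝ → ℝ}
    (hk : ∀ a b, IntervalIntegrable k volume a b) {β lam : ℝ} (hlam : lam ≠ 0) {φ : ℝ → ℝ}
    (hφ : ContinuousOn φ (Icc 0 1))
    (heig : ∀ x ∈ Icc (0 : ℝ) 1, ∫ y in (0 : ℝ)..1, covKernel k β x y * φ y = lam * φ x)
    {ψ : ℝ → ℝ} (hψ : ∀ x, ψ x = exp (-(β * x)) * ∫ r in x..1, exp (β * r) * φ r) :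
    ContDiffOn ℝ 2 ψ (Icc 0 1) ∧
    (∀ x ∈ Icc (0 : ℝ) 1, ∫ y in (0 : ℝ)..1, k (x - y) * ψ y =
        lam * (β ^ 2 * ψ x - iteratedDerivWithin 2 ψ (Icc 0 1) x)) ∧
    ψ 1 = 0 ∧ derivWithin ψ (Icc 0 1) 0 + β * ψ 0 = 0 := by
  set B := crossIntegral k β φ
  have hB : Continuous B := continuous_crossIntegral β hk hφ
  set Φ : ℝ → ℝ := fun x => lam⁻¹ * duhamel β 0 B x
  have hΦ : ∀ x, HasDerivAt Φ (β * Φ x + lam⁻¹ * B x) x := fun x =>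
    ((hasDerivAt_duhamel hB β 0 x).const_mul lam⁻¹).congr_deriv (by ring)
  have hφΦ : EqOn φ Φ (Icc 0 1) := fun x hx => by
    change φ x = lam⁻¹ * duhamel β 0 (crossIntegral k β φ) x
    rw [← integral_covKernel_mul_eq_duhamel β hk hφ hx, heig x hx, inv_mul_cancel_left₀ hlam]
  set χ : ℝ → ℝ := fun x => -duhamel (-β) 1 Φ x
  have hψχ : EqOn ψ χ (Icc 0 1) := fun x hx => by
    rw [hψ, exp_mul_integral_tail_eq_neg_duhamel hφΦ hx]
  have hχ : ∀ x, HasDerivAt χ (-β * χ x - Φ x) x := fun x =>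
    (hasDerivAt_duhamel (continuous_iff_continuousAt.2 fun x => (hΦ x).continuousAt) (-β) 1
      x).neg.congr_deriv (by ring)
  have hχ' : ∀ x, HasDerivAt (fun x => -β * χ x - Φ x) (β ^ 2 * χ x - lam⁻¹ * B x) x :=
    fun x => (((hχ x).const_mul (-β)).sub (hΦ x)).congr_deriv (by ring)
  have hχ'' : Continuous fun x => β ^ 2 * χ x - lam⁻¹ * B x :=
    (continuous_const.mul (continuous_iff_continuousAt.2 fun x => (hχ x).continuousAt)).sub
      (continuous_const.mul hB)
  have hUD : UniqueDiffOn ℝ (Icc (0 : ℝ) 1) := uniqueDiffOn_Icc one_pos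
  have h0 : (0 : ℝ) ∈ Icc (0 : ℝ) 1 := left_mem_Icc.2 zero_le_one
  refine ⟨(contDiff_two_of_hasDerivAt hχ hχ' hχ'').contDiffOn.congr hψχ, fun x hx => ?_,
    by simp [hψ], ?_⟩
  · rw [iteratedDerivWithin_congr hψχ hx,
      iteratedDerivWithin_two_eq_of_hasDerivAt hχ hχ' hUD hx, ← hψχ hx]
    simp only [hψ, integral_kernel_mul_tail_eq_crossIntegral β hk hφ]
    field_simp
    ring
  · rw [derivWithin_congr hψχ (hψχ h0), (hχ 0).hasDerivWithinAt.derivWithin (hUD 0 h0), hψχ h0]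
    simp [Φ, duhamel]

theorem fou_generalized_eigenproblem_general
    (H : ℝ) (hH : H ∈ Set.Ioo (1 / 2 : ℝ) 1)
    (α : ℝ) (hα : α = 2 - 2 * H)
    (cα : ℝ)
    (β lam : ℝ) (hlam : 0 < lam)
    (φ : ℝ → ℝ) (hφcont : ContinuousOn φ (Set.Icc 0 1))
    (hφeig : ∀ x ∈ Set.Icc (0 : ℝ) 1,
      ∫ y in (0 : ℝ)..1,
        (∫ u in (0 : ℝ)..x, ∫ v in (0 : ℝ)..y,
          Real.exp (β * (x - u)) * Real.exp (β * (y - v)) * cα * |u - v| ^ (-α)) *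
        φ y = lam * φ x)
    (ψ : ℝ → ℝ)
    (hψ : ∀ x, ψ x = Real.exp (-(β * x)) * ∫ r in x..1, Real.exp (β * r) * φ r) :
    ContDiffOn ℝ 2 ψ (Set.Icc 0 1) ∧
    (∀ x ∈ Set.Icc (0 : ℝ) 1,
      ∫ y in (0 : ℝ)..1, cα * |x - y| ^ (-α) * ψ y =
        lam * (β ^ 2 * ψ x - iteratedDerivWithin 2 ψ (Set.Icc 0 1) x)) ∧
    ψ 1 = 0 ∧
    derivWithin ψ (Set.Icc 0 1) 0 + β * ψ 0 = 0 := by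
  have hα_lt : -1 < -α := by linarith [hH.1]
  have hk : ∀ a b, IntervalIntegrable (fun w => cα * |w| ^ (-α)) volume a b := fun a b =>
    (intervalIntegrable_abs_rpow hα_lt a b).const_mul cα
  simpa only [mul_assoc] using generalized_eigenproblem_of_covKernel_eigenproblem hk hlam.ne'
    hφcont (by simpa only [covKernel, mul_assoc] using hφeig) hψ

/-- **Reduction of the fractional Ornstein--Uhlenbeck eigenproblem (`H > 1/2`) to a
generalized eigenproblem.** If `φ` solves
`∫₀¹ (∫₀ˣ∫₀ʸ e^{β(x-u)} e^{β(y-v)} c_α |u-v|^{-α} dv du) φ(y) dy = λ φ(x)` on `[0,1]`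
then `ψ(x) = e^{-βx} ∫ₓ¹ e^{βr} φ(r) dr` is twice continuously differentiable,
satisfies `∫₀¹ c_α |x-y|^{-α} ψ(y) dy = λ (β² ψ(x) - ψ''(x))` on `[0,1]`, and obeys
`ψ(1) = 0`, `ψ'(0) + β ψ(0) = 0`. -/
theorem fou_generalized_eigenproblem
    (H : ℝ) (hH : H ∈ Set.Ioo (1 / 2 : ℝ) 1)
    (α : ℝ) (hα : α = 2 - 2 * H)
    (cα : ℝ) (hcα : cα = (1 - α / 2) * (1 - α))
    (β lam : ℝ) (hlam : 0 < lam)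
    (φ : ℝ → ℝ) (hφcont : ContinuousOn φ (Set.Icc 0 1))
    (hφeig : ∀ x ∈ Set.Icc (0 : ℝ) 1,
      ∫ y in (0 : ℝ)..1,
        (∫ u in (0 : ℝ)..x, ∫ v in (0 : ℝ)..y,
          Real.exp (β * (x - u)) * Real.exp (β * (y - v)) * cα * |u - v| ^ (-α)) *
        φ y = lam * φ x)
    (ψ : ℝ → ℝ)
    (hψ : ∀ x, ψ x = Real.exp (-(β * x)) * ∫ r in x..1, Real.exp (β * r) * φ r) :
    ContDiffOn ℝ 2 ψ (Set.Icc 0 1) ∧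
    (∀ x ∈ Set.Icc (0 : ℝ) 1,
      ∫ y in (0 : ℝ)..1, cα * |x - y| ^ (-α) * ψ y =
        lam * (β ^ 2 * ψ x - iteratedDerivWithin 2 ψ (Set.Icc 0 1) x)) ∧
    ψ 1 = 0 ∧
    derivWithin ψ (Set.Icc 0 1) 0 + β * ψ 0 = 0 :=
  fou_generalized_eigenproblem_general H hH α hα cα β lam hlam φ hφcont hφeig ψ hψ
end
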